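/- arXiv:2010.16376 — 4 statements merged into one kernel-verified Lean document; each statement's English description precedes it below -/
import Mathlib

section
/- If m balls are thrown into n bins, with each ball thrown independently of the others (but not necessarily uniformly, and with possibly different distributions per ball), and B_i denotes the number of balls in bin i, then the random variables B_1, …, B_n are negatively associated. -/
open MeasureTheory

/-- A function `f` on vectors depends only on coordinates in the set `S`. -/
def DependsOnCoords {ι : Type*} (f : (ι → ℝ) → ℝ) (S : Set ι) : Prop :=
  ∀ x y : ι → ℝ, (∀ i ∈ S, x i = y i) → f x = f y

/-- Random variables `X i` are negatively associated: every two monotone increasing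
functions defined on disjoint subsets of the variables are negatively correlated. -/
def NegAssoc {Ω ι : Type*} [MeasurableSpace Ω] (μ : Measure Ω) (X : ι → Ω → ℝ) : Prop :=
  ∀ (S T : Set ι), Disjoint S T →
    ∀ f g : (ι → ℝ) → ℝ, Monotone f → Monotone g → DependsOnCoords f S → DependsOnCoords g T →
      ∫ ω, f (fun i => X i ω) * g (fun i => X i ω) ∂μ ≤
        (∫ ω, f (fun i => X i ω) ∂μ) * ∫ ω, g (fun i => X i ω) ∂μ

/-!
Induct on the number of balls, conditioning on the bin `j` of the first one. Given `j`, the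
remaining counts are shifted by the unit vector at `j`, so the induction hypothesis applied to the
shifted functions gives `E[f g | j] ≤ F j * G j`, where `F j`, `G j` are the conditional means.
By monotonicity `F j ≥ F₀` and `G j ≥ G₀`, the means without the first ball; and since `f`, `g`
depend on disjoint sets of bins, for every `j` one of `F j = F₀`, `G j = G₀` holds. For such
functions `E[F G] - E[F] E[G] = -(E[F] - F₀) (E[G] - G₀) ≤ 0`.
-/

open Finset ProbabilityTheory

lemma sum_mul_le_sum_mul_sum_of_sub_mul_sub_eq_zero {α : Type*} [Fintype α] {w a b : α → ℝ}
    {a₀ b₀ : ℝ} (hw : ∀ x, 0 ≤ w x) (hw1 : ∑ x, w x = 1) (ha : ∀ x, a₀ ≤ a x)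
    (hb : ∀ x, b₀ ≤ b x) (hab : ∀ x, (a x - a₀) * (b x - b₀) = 0) :
    ∑ x, w x * (a x * b x) ≤ (∑ x, w x * a x) * ∑ x, w x * b x := by
  have hmean : ∀ {c : α → ℝ} {c₀ : ℝ}, (∀ x, c₀ ≤ c x) → c₀ ≤ ∑ x, w x * c x := fun hc =>
    calc _ = ∑ x, w x * _ := by rw [← sum_mul, hw1, one_mul]
      _ ≤ _ := sum_le_sum fun x _ => mul_le_mul_of_nonneg_left (hc x) (hw x)
  have hprod : ∑ x, w x * (a x * b x) = a₀ * ∑ x, w x * b x + b₀ * ∑ x, w x * a x - a₀ * b₀ := by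
    rw [mul_sum, mul_sum, ← mul_one (a₀ * b₀), ← hw1, mul_sum, ← sum_add_distrib,
      ← sum_sub_distrib]
    exact sum_congr rfl fun x _ => by linear_combination w x * hab x
  rw [hprod]
  nlinarith [mul_nonneg (sub_nonneg.2 (hmean ha)) (sub_nonneg.2 (hmean hb))]

lemma DependsOnCoords.comp_add_left {ι : Type*} {f : (ι → ℝ) → ℝ} {S : Set ι}
    (hf : DependsOnCoords f S) (v : ι → ℝ) : DependsOnCoords (fun x => f (v + x)) S :=
  fun x y hxy => hf _ _ fun i hi => by simp only [Pi.add_apply, hxy i hi]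

lemma DependsOnCoords.apply_single_add_of_notMem {ι : Type*} [DecidableEq ι]
    {f : (ι → ℝ) → ℝ} {S : Set ι} (hf : DependsOnCoords f S) {j : ι} (hj : j ∉ S) (c : ℝ)
    (x : ι → ℝ) : f (Pi.single j c + x) = f x :=
  hf _ _ fun i hi => by
    rw [Pi.add_apply, Pi.single_eq_of_ne (ne_of_mem_of_not_mem hi hj), zero_add]

section

variable {ι : Type*}

def ballCount {κ : Type*} [Fintype κ] [DecidableEq ι] (z : κ → ι) : ι → ℝ :=
  fun i => ((univ.filter (fun b => z b = i)).card : ℝ)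

lemma ballCount_cons [DecidableEq ι] {m : ℕ} (j : ι) (z : Fin m → ι) :
    ballCount (Fin.cons j z) = Pi.single j 1 + ballCount z := by
  funext i
  simp only [ballCount, card_filter, Fin.sum_univ_succ, Fin.cons_zero, Fin.cons_succ,
    Pi.add_apply, Pi.single_apply, eq_comm (a := j)]
  push_cast
  rfl

def piExpect {κ : Type*} [Fintype κ] [DecidableEq κ] [Fintype ι] (p : κ → ι → ℝ)
    (φ : (κ → ι) → ℝ) : ℝ :=
  ∑ z, (∏ b, p b (z b)) * φ z

lemma piExpect_succ [Fintype ι] {m : ℕ} (p : Fin (m + 1) → ι → ℝ) (φ : (Fin (m + 1) → ι) → ℝ) :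
    piExpect p φ = ∑ j, p 0 j * piExpect (fun b => p b.succ) (fun z => φ (Fin.cons j z)) := by
  rw [piExpect, ← (Fin.consEquiv fun _ => ι).sum_comp, Fintype.sum_prod_type]
  refine sum_congr rfl fun j _ => ?_
  rw [piExpect, mul_sum]
  refine sum_congr rfl fun z _ => ?_
  simp only [Fin.consEquiv, Equiv.coe_fn_mk, Fin.prod_univ_succ, Fin.cons_zero, Fin.cons_succ]
  ring

lemma piExpect_mono {κ : Type*} [Fintype κ] [DecidableEq κ] [Fintype ι] {p : κ → ι → ℝ}
    (hp : ∀ b i, 0 ≤ p b i) {φ ψ : (κ → ι) → ℝ} (h : φ ≤ ψ) : piExpect p φ ≤ piExpect p ψ :=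
  sum_le_sum fun z _ => mul_le_mul_of_nonneg_left (h z) (prod_nonneg fun b _ => hp b (z b))

theorem piExpect_mul_ballCount_le [Fintype ι] [DecidableEq ι] {S T : Set ι}
    (hST : Disjoint S T) {m : ℕ} {p : Fin m → ι → ℝ} (hp : ∀ b i, 0 ≤ p b i)
    (hp1 : ∀ b, ∑ i, p b i = 1)
    {f g : (ι → ℝ) → ℝ} (hf : Monotone f) (hg : Monotone g)
    (hfS : DependsOnCoords f S) (hgT : DependsOnCoords g T) :
    piExpect p (fun z => f (ballCount z) * g (ballCount z)) ≤
      piExpect p (fun z => f (ballCount z)) * piExpect p (fun z => g (ballCount z)) := by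
  induction m generalizing f g with
  | zero => simp [piExpect]
  | succ m ih =>
    rw [piExpect_succ, piExpect_succ, piExpect_succ]
    simp only [ballCount_cons]
    set q : Fin m → ι → ℝ := fun b => p b.succ
    have hq : ∀ b i, 0 ≤ q b i := fun b => hp b.succ
    have shift_le : ∀ {h : (ι → ℝ) → ℝ}, Monotone h → ∀ j,
        piExpect q (fun z => h (ballCount z)) ≤
          piExpect q (fun z => h (Pi.single j 1 + ballCount z)) := fun hh j =>
      piExpect_mono hq fun z => hh (le_add_of_nonneg_left (Pi.single_nonneg.2 zero_le_one))
    have shift_eq : ∀ {h : (ι → ℝ) → ℝ} {U : Set ι}, DependsOnCoords h U → ∀ j ∉ U,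
        piExpect q (fun z => h (Pi.single j 1 + ballCount z)) =
          piExpect q (fun z => h (ballCount z)) :=
      fun hh j hj => by simp only [hh.apply_single_add_of_notMem hj]
    have translate : ∀ {h : (ι → ℝ) → ℝ} (v : ι → ℝ), Monotone h →
        Monotone (fun x => h (v + x)) :=
      fun v hh x y hxy => hh (add_le_add_right hxy v)
    refine (sum_le_sum fun j _ => mul_le_mul_of_nonneg_left
      (ih hq (fun b => hp1 b.succ) (translate _ hf) (translate _ hg)
        (hfS.comp_add_left (Pi.single j 1)) (hgT.comp_add_left (Pi.single j 1))) (hp 0 j)).trans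
      (sum_mul_le_sum_mul_sum_of_sub_mul_sub_eq_zero (hp 0) (hp1 0) (shift_le hf) (shift_le hg)
        fun j => ?_)
    by_cases hj : j ∈ S
    · rw [shift_eq hgT j (Set.disjoint_left.1 hST hj), sub_self, mul_zero]
    · rw [shift_eq hfS j hj, sub_self, zero_mul]

end

lemma integral_comp_eq_piExpect {Ω κ β : Type*} [MeasurableSpace Ω] {μ : Measure Ω}
    [IsProbabilityMeasure μ] [Fintype κ] [DecidableEq κ] [Fintype β] [MeasurableSpace β]
    [MeasurableSingletonClass β] {Z : κ → Ω → β} (hZ : ∀ b, Measurable (Z b))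
    (hind : iIndepFun Z μ) (φ : (κ → β) → ℝ) :
    ∫ ω, φ (fun b => Z b ω) ∂μ = piExpect (fun b i => (μ.map (Z b)).real {i}) φ := by
  rw [← integral_map (measurable_pi_lambda _ hZ).aemeasurable
      (Measurable.of_discrete (f := φ)).aestronglyMeasurable,
    hind.map_fun_eq_pi_map fun b => (hZ b).aemeasurable, integral_fintype .of_finite]
  simp only [piExpect, measureReal_def, Measure.pi_singleton, ENNReal.toReal_prod, smul_eq_mul]

/-- if `m` balls are thrown independently into `n` bins (not necessarily
uniformly, with possibly different distributions per ball), the bin counts `B i` are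
negatively associated. -/
theorem balls_and_bins_NA
    {Ω : Type*} [MeasurableSpace Ω] (μ : Measure Ω) [IsProbabilityMeasure μ]
    (m n : ℕ) (Z : Fin m → Ω → Fin n)
    (hmeas : ∀ b, Measurable (Z b))
    (hind : ProbabilityTheory.iIndepFun Z μ) :
    NegAssoc μ (fun (i : Fin n) (ω : Ω) =>
      ((Finset.univ.filter (fun b : Fin m => Z b ω = i)).card : ℝ)) := by
  intro S T hST f g hf hg hfS hgT
  have hlaw : ∀ b, ∑ i, (μ.map (Z b)).real {i} = 1 := fun b => by
    have := Measure.isProbabilityMeasure_map (μ := μ) (hmeas b).aemeasurable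
    simp
  have key := piExpect_mul_ballCount_le hST (fun _ _ => measureReal_nonneg) hlaw hf hg hfS hgT
  simp only [← integral_comp_eq_piExpect hmeas hind] at key
  exact key
end

section
/- In the balls-and-bins process where m balls are thrown independently into n bins (not necessarily uniformly), the indicator random variables N_i = min{1, B_i} (indicating that bin i is non-empty) are negatively associated. -/
/-!
By independence, all expectations are finite sums over the assignments of balls to bins,
weighted by products of the marginal laws. Induct on the number of balls, conditioning on the
bin `j` of the first ball: the occupancy vector is then that of the other balls with coordinate
`j` set to `1`. For monotone `f`, `g` depending on disjoint sets of bins, setting coordinate `j`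
to `1` can only increase the conditional expectations `A j`, `B j` of `f` and `g`, and leaves at
least one of them unchanged. Writing `A = A₀ + a`, `B = B₀ + b` with `a b = 0`, the gap
`E[A] E[B] - E[A B]` is `E[a] E[b] ≥ 0`.
-/

open MeasureTheory

open ProbabilityTheory Function Finset

theorem sum_mul_mul_le_mul_of_sub_mul_sub_eq_zero {ι : Type*} [Fintype ι]
    (p A B : ι → ℝ) (A₀ B₀ : ℝ)
    (hp : ∀ j, 0 ≤ p j) (hp₁ : ∑ j, p j = 1) (hA : ∀ j, A₀ ≤ A j) (hB : ∀ j, B₀ ≤ B j)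
    (hAB : ∀ j, (A j - A₀) * (B j - B₀) = 0) :
    ∑ j, p j * (A j * B j) ≤ (∑ j, p j * A j) * ∑ j, p j * B j := by
  have hA₀ : A₀ ≤ ∑ j, p j * A j := by
    calc A₀ = ∑ j, p j * A₀ := by rw [← sum_mul, hp₁, one_mul]
      _ ≤ _ := sum_le_sum fun j _ => mul_le_mul_of_nonneg_left (hA j) (hp j)
  have hB₀ : B₀ ≤ ∑ j, p j * B j := by
    calc B₀ = ∑ j, p j * B₀ := by rw [← sum_mul, hp₁, one_mul]
      _ ≤ _ := sum_le_sum fun j _ => mul_le_mul_of_nonneg_left (hB j) (hp j)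
  have hlin : ∑ j, p j * (A j * B j) = A₀ * ∑ j, p j * B j + B₀ * ∑ j, p j * A j - A₀ * B₀ := by
    rw [mul_sum, mul_sum, ← sum_add_distrib,
      show A₀ * B₀ = ∑ j, A₀ * B₀ * p j by rw [← mul_sum, hp₁, mul_one], ← sum_sub_distrib]
    exact sum_congr rfl fun j _ => by linear_combination p j * hAB j
  rw [hlin]
  nlinarith [mul_nonneg (sub_nonneg.mpr hA₀) (sub_nonneg.mpr hB₀)]

section ProdExpect

variable {α : Type*} [Fintype α]

/-- The expectation of `F` when ball `b` lands in bin `j` with probability `p b j`,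
independently of the other balls. -/
noncomputable def prodExpect {ι : Type*} [Fintype ι] [DecidableEq ι]
    (p : ι → α → ℝ) (F : (ι → α) → ℝ) : ℝ :=
  ∑ z : ι → α, (∏ b, p b (z b)) * F z

theorem prodExpect_mono {ι : Type*} [Fintype ι] [DecidableEq ι] {p : ι → α → ℝ}
    (hp : ∀ b j, 0 ≤ p b j) {F G : (ι → α) → ℝ} (hFG : F ≤ G) :
    prodExpect p F ≤ prodExpect p G :=
  sum_le_sum fun z _ => mul_le_mul_of_nonneg_left (hFG z) (prod_nonneg fun b _ => hp b _)

theorem prodExpect_succ {m : ℕ} (p : Fin (m + 1) → α → ℝ) (F : (Fin (m + 1) → α) → ℝ) :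
    prodExpect p F =
      ∑ j, p 0 j * prodExpect (fun b => p b.succ) (fun z => F (Fin.cons j z)) := by
  rw [prodExpect, ← (Fin.consEquiv fun _ => α).sum_comp, Fintype.sum_prod_type]
  refine sum_congr rfl fun j _ => ?_
  rw [prodExpect, mul_sum]
  refine sum_congr rfl fun z _ => ?_
  simp [Fin.consEquiv, Fin.prod_univ_succ, mul_assoc]

end ProdExpect

section Occupancy

variable {α : Type*} [DecidableEq α]

noncomputable def occupancy {m : ℕ} (z : Fin m → α) : α → ℝ :=
  fun i => min 1 (#{b | z b = i} : ℝ)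

theorem occupancy_le_one {m : ℕ} (z : Fin m → α) (i : α) : occupancy z i ≤ 1 :=
  min_le_left _ _

theorem occupancy_cons {m : ℕ} (j : α) (z : Fin m → α) :
    occupancy (Fin.cons j z : Fin (m + 1) → α) = update (occupancy z) j 1 := by
  funext i
  have hcard : (#{b | (Fin.cons j z : Fin (m + 1) → α) b = i} : ℝ) =
      (if j = i then 1 else 0) + #{b | z b = i} := by
    simp only [card_filter, Fin.sum_univ_succ, Fin.cons_zero, Fin.cons_succ]
    push_cast
    rfl
  rcases eq_or_ne i j with rfl | hij
  · simp only [occupancy, hcard, if_pos, update_self]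
    exact min_eq_left (by linarith [(#{b | z b = i}).cast_nonneg (α := ℝ)])
  · simp [occupancy, hcard, hij, hij.symm]

end Occupancy

section Update

variable {ι : Type*} [DecidableEq ι] {f : (ι → ℝ) → ℝ} {S : Set ι}

theorem DependsOnCoords.comp_update (hf : DependsOnCoords f S) (j : ι) (c : ℝ) :
    DependsOnCoords (fun x => f (update x j c)) S := by
  intro x y hxy
  refine hf _ _ fun i hi => ?_
  rcases eq_or_ne i j with rfl | hij
  · simp
  · simp [hij, hxy i hi]

theorem DependsOnCoords.apply_update_of_notMem (hf : DependsOnCoords f S) {j : ι} (hj : j ∉ S)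
    (x : ι → ℝ) (c : ℝ) : f (update x j c) = f x :=
  hf _ _ fun _ hi => update_of_ne (ne_of_mem_of_not_mem hi hj) _ _

theorem Monotone.comp_update (hf : Monotone f) (j : ι) (c : ℝ) :
    Monotone fun x => f (update x j c) :=
  hf.comp fun _ _ hxy => update_le_update_iff.mpr ⟨le_rfl, fun k _ => hxy k⟩

end Update

theorem prodExpect_occupancy_mul_le {α : Type*} [Fintype α] [DecidableEq α] {S T : Set α}
    (hST : Disjoint S T) {m : ℕ}
    {p : Fin m → α → ℝ} (hp : ∀ b j, 0 ≤ p b j) (hp₁ : ∀ b, ∑ j, p b j = 1)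
    {f g : (α → ℝ) → ℝ} (hf : Monotone f) (hg : Monotone g)
    (hfS : DependsOnCoords f S) (hgT : DependsOnCoords g T) :
    prodExpect p (fun z => f (occupancy z) * g (occupancy z)) ≤
      prodExpect p (fun z => f (occupancy z)) * prodExpect p (fun z => g (occupancy z)) := by
  induction m generalizing f g with
  | zero => simp [prodExpect]
  | succ m ih =>
    set q : Fin m → α → ℝ := fun b => p b.succ
    have hq : ∀ b j, 0 ≤ q b j := fun b => hp b.succ
    set A : α → ℝ := fun j => prodExpect q fun z => f (update (occupancy z) j 1)
    set B : α → ℝ := fun j => prodExpect q fun z => g (update (occupancy z) j 1)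
    set A₀ := prodExpect q fun z => f (occupancy z)
    set B₀ := prodExpect q fun z => g (occupancy z)
    have hA : ∀ j, A₀ ≤ A j := fun j => prodExpect_mono hq fun z =>
      hf (le_update_self_iff.mpr (occupancy_le_one z j))
    have hB : ∀ j, B₀ ≤ B j := fun j => prodExpect_mono hq fun z =>
      hg (le_update_self_iff.mpr (occupancy_le_one z j))
    have hAB : ∀ j, (A j - A₀) * (B j - B₀) = 0 := by
      intro j
      by_cases hj : j ∈ S
      · have hBj : B j = B₀ := congrArg (prodExpect q) <| funext fun _ =>
          hgT.apply_update_of_notMem (Set.disjoint_left.mp hST hj) _ _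
        rw [hBj, sub_self, mul_zero]
      · have hAj : A j = A₀ := congrArg (prodExpect q) <| funext fun _ =>
          hfS.apply_update_of_notMem hj _ _
        rw [hAj, sub_self, zero_mul]
    simp only [prodExpect_succ p, occupancy_cons]
    calc ∑ j, p 0 j * prodExpect q (fun z =>
            f (update (occupancy z) j 1) * g (update (occupancy z) j 1))
        ≤ ∑ j, p 0 j * (A j * B j) := sum_le_sum fun j _ => mul_le_mul_of_nonneg_left
          (ih hq (fun b => hp₁ b.succ) (hf.comp_update j 1)
            (hg.comp_update j 1) (hfS.comp_update j 1) (hgT.comp_update j 1)) (hp 0 j)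
      _ ≤ (∑ j, p 0 j * A j) * ∑ j, p 0 j * B j :=
          sum_mul_mul_le_mul_of_sub_mul_sub_eq_zero (p 0) A B A₀ B₀ (hp 0) (hp₁ 0) hA hB hAB

theorem ProbabilityTheory.iIndepFun.integral_comp_eq_prodExpect {Ω ι α : Type*}
    [MeasurableSpace Ω] {μ : Measure Ω} [IsProbabilityMeasure μ] [Fintype ι] [DecidableEq ι]
    [Fintype α] [MeasurableSpace α] [MeasurableSingletonClass α] {Z : ι → Ω → α}
    (hmeas : ∀ b, Measurable (Z b)) (hind : iIndepFun Z μ) (H : (ι → α) → ℝ) :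
    ∫ ω, H (fun b => Z b ω) ∂μ = prodExpect (fun b j => μ.real (Z b ⁻¹' {j})) H := by
  have hW : Measurable fun ω b => Z b ω := measurable_pi_lambda _ hmeas
  rw [← integral_map hW.aemeasurable (measurable_of_finite H).aestronglyMeasurable,
    hind.map_fun_eq_pi_map fun b => (hmeas b).aemeasurable, integral_fintype .of_finite]
  refine sum_congr rfl fun z _ => ?_
  simp [measureReal_def, Measure.map_apply (hmeas _) (measurableSet_singleton _),
    ENNReal.toReal_prod]

/-- in the balls-and-bins process where `m` balls are thrown independently
into `n` bins, the indicators `N i = min 1 (B i)` of the bins being non-empty are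
negatively associated. -/
theorem nonempty_bins_NA
    {Ω : Type*} [MeasurableSpace Ω] (μ : Measure Ω) [IsProbabilityMeasure μ]
    (m n : ℕ) (Z : Fin m → Ω → Fin n)
    (hmeas : ∀ b, Measurable (Z b))
    (hind : ProbabilityTheory.iIndepFun Z μ) :
    NegAssoc μ (fun (i : Fin n) (ω : Ω) =>
      min 1 ((Finset.univ.filter (fun b : Fin m => Z b ω = i)).card : ℝ)) := by
  intro S T hST f g hf hg hfS hgT
  have hp : ∀ b j, 0 ≤ μ.real (Z b ⁻¹' {j}) := fun _ _ => measureReal_nonneg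
  have hp₁ : ∀ b, ∑ j, μ.real (Z b ⁻¹' {j}) = 1 := fun b => by
    rw [sum_measureReal_preimage_singleton _ fun j _ => hmeas b (measurableSet_singleton j)]
    simp
  have key := prodExpect_occupancy_mul_le hST hp hp₁ hf hg hfS hgT
  simp only [← hind.integral_comp_eq_prodExpect hmeas] at key
  exact key
end

section
/- Let X_1, …, X_n ∈ {0,1} be binary random variables such that X_1 + ⋯ + X_n ≤ 1 always holds. Then X_1, …, X_n are negatively associated: for any two monotone increasing functions f, g defined on disjoint subsets of the variables, E[f·g] ≤ E[f]·E[g]. -/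
/-! Since the `X i` are binary with sum at most one, the vector `(X i ω)ᵢ` is either `0` or a
standard basis vector `eⱼ`. On such vectors every function is affine in the coordinates (which gives
integrability), and if `f`, `g` depend on disjoint sets of coordinates then `j` is missed by one of
them, so `(f x - f 0) * (g x - g 0) = 0`. Hence `f g = f(0) g + g(0) f - f(0) g(0)` pointwise, and
`E[f] E[g] - E[f g] = (E[f] - f(0)) (E[g] - g(0)) ≥ 0` because monotonicity gives `f ≥ f(0)` and
`g ≥ g(0)` on nonnegative vectors. -/

open MeasureTheory

open Finset

section Vectors

variable {ι : Type*} [DecidableEq ι]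

lemma eq_zero_or_exists_eq_single_of_sum_le_one [Fintype ι] {x : ι → ℝ}
    (h01 : ∀ i, x i = 0 ∨ x i = 1) (hsum : ∑ i, x i ≤ 1) :
    x = 0 ∨ ∃ j, x = Pi.single j 1 := by
  by_cases hzero : x = 0
  · exact .inl hzero
  obtain ⟨j, hj0⟩ := Function.ne_iff.mp hzero
  have hj : x j = 1 := (h01 j).resolve_left hj0
  have hother : ∀ k, k ≠ j → x k = 0 := fun k hkj => (h01 k).resolve_right fun hk => by
    have hpair := sum_le_sum_of_subset_of_nonneg (subset_univ {j, k})
      fun i _ _ => (h01 i).elim (·.ge) (fun h => h ▸ zero_le_one)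
    rw [sum_pair hkj.symm, hj, hk] at hpair
    linarith
  refine .inr ⟨j, funext fun k => ?_⟩
  by_cases hkj : k = j
  · rw [hkj, hj, Pi.single_eq_same]
  · rw [hother k hkj, Pi.single_eq_of_ne hkj]

lemma apply_eq_add_sum_of_eq_zero_or_single [Fintype ι] (f : (ι → ℝ) → ℝ) {x : ι → ℝ}
    (hx : x = 0 ∨ ∃ j, x = Pi.single j 1) :
    f x = f 0 + ∑ j, (f (Pi.single j 1) - f 0) * x j := by
  rcases hx with rfl | ⟨j, rfl⟩
  · simp
  · simp [Pi.single_apply]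

lemma DependsOnCoords.apply_single_eq_apply_zero {f : (ι → ℝ) → ℝ} {S : Set ι}
    (hf : DependsOnCoords f S) {j : ι} (hj : j ∉ S) (c : ℝ) : f (Pi.single j c) = f 0 :=
  hf _ _ fun i hi => by simp [ne_of_mem_of_not_mem hi hj]

lemma sub_apply_zero_mul_sub_apply_zero_eq_zero {f g : (ι → ℝ) → ℝ} {S T : Set ι}
    (hST : Disjoint S T) (hf : DependsOnCoords f S) (hg : DependsOnCoords g T) {x : ι → ℝ}
    (hx : x = 0 ∨ ∃ j, x = Pi.single j 1) : (f x - f 0) * (g x - g 0) = 0 := by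
  rcases hx with rfl | ⟨j, rfl⟩
  · simp
  by_cases hjS : j ∈ S
  · rw [hg.apply_single_eq_apply_zero (hST.notMem_of_mem_left hjS), sub_self, mul_zero]
  · rw [hf.apply_single_eq_apply_zero hjS, sub_self, zero_mul]

end Vectors

section Integrals

variable {Ω : Type*} [MeasurableSpace Ω] {μ : Measure Ω}

lemma integrable_apply_of_eq_zero_or_single {ι : Type*} [Fintype ι] [DecidableEq ι]
    [IsFiniteMeasure μ] {X : ι → Ω → ℝ} (hX : ∀ i, Integrable (X i) μ)
    (hx : ∀ ω, (fun i => X i ω) = 0 ∨ ∃ j, (fun i => X i ω) = Pi.single j 1)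
    (f : (ι → ℝ) → ℝ) : Integrable (fun ω => f (fun i => X i ω)) μ := by
  have haffine : (fun ω => f (fun i => X i ω)) =
      fun ω => f 0 + ∑ j, (f (Pi.single j 1) - f 0) * X j ω :=
    funext fun ω => apply_eq_add_sum_of_eq_zero_or_single f (hx ω)
  rw [haffine]
  exact (integrable_const _).add (integrable_finsetSum _ fun j _ => (hX j).const_mul _)

lemma integral_mul_le_of_sub_mul_sub_eq_zero [IsProbabilityMeasure μ] {F G : Ω → ℝ} {a b : ℝ}
    (hF : Integrable F μ) (hG : Integrable G μ) (haF : ∀ᵐ ω ∂μ, a ≤ F ω)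
    (hbG : ∀ᵐ ω ∂μ, b ≤ G ω) (hFG : ∀ᵐ ω ∂μ, (F ω - a) * (G ω - b) = 0) :
    ∫ ω, F ω * G ω ∂μ ≤ (∫ ω, F ω ∂μ) * ∫ ω, G ω ∂μ := by
  have hprod : ∫ ω, F ω * G ω ∂μ = a * ∫ ω, G ω ∂μ + b * ∫ ω, F ω ∂μ - a * b := by
    rw [integral_congr_ae (g := fun ω => a * G ω + b * F ω - a * b)
        (hFG.mono fun ω h => by linear_combination h),
      integral_sub (f := fun ω => a * G ω + b * F ω)
        ((hG.const_mul a).add (hF.const_mul b)) (integrable_const _),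
      integral_add (hG.const_mul a) (hF.const_mul b), integral_const_mul, integral_const_mul]
    simp
  have ha : a ≤ ∫ ω, F ω ∂μ := by simpa using integral_mono_ae (integrable_const a) hF haF
  have hb : b ≤ ∫ ω, G ω ∂μ := by simpa using integral_mono_ae (integrable_const b) hG hbG
  rw [hprod]
  linear_combination mul_nonneg (sub_nonneg.2 ha) (sub_nonneg.2 hb)

end Integrals

/-- 0-1 principle: binary random variables whose sum is always at most 1
are negatively associated. -/
theorem zero_one_principle_NA
    {Ω : Type*} [MeasurableSpace Ω] (μ : Measure Ω) [IsProbabilityMeasure μ]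
    (n : ℕ) (X : Fin n → Ω → ℝ)
    (hmeas : ∀ i, Measurable (X i))
    (h01 : ∀ i ω, X i ω = 0 ∨ X i ω = 1)
    (hsum : ∀ ω, ∑ i, X i ω ≤ 1) :
    NegAssoc μ X := by
  intro S T hST f g hf hg hfS hgT
  have hx (ω : Ω) : (fun i => X i ω) = 0 ∨ ∃ j, (fun i => X i ω) = Pi.single j 1 :=
    eq_zero_or_exists_eq_single_of_sum_le_one (fun i => h01 i ω) (hsum ω)
  have hX (i : Fin n) : Integrable (X i) μ :=
    .of_bound (hmeas i).aestronglyMeasurable 1 <| ae_of_all _ fun ω => by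
      rcases h01 i ω with h | h <;> simp [h]
  have hnonneg (ω : Ω) : 0 ≤ fun i => X i ω := fun i => by
    rcases h01 i ω with h | h <;> simp [h]
  exact integral_mul_le_of_sub_mul_sub_eq_zero
    (integrable_apply_of_eq_zero_or_single hX hx f)
    (integrable_apply_of_eq_zero_or_single hX hx g)
    (ae_of_all _ fun ω => hf (hnonneg ω)) (ae_of_all _ fun ω => hg (hnonneg ω))
    (ae_of_all _ fun ω => sub_apply_zero_mul_sub_apply_zero_eq_zero hST hfS hgT (hx ω))
end

section
/- Let f(X_1,…,X_n) be a function of n mutually independent {0,1}-valued random variables satisfying the Lipschitz property with constants d_1,…,d_n, and suppose that for each i and each assignment X_{−i} of the other variables, the conditional variance Var[f | X_{−i}] is at most λ_i. Let λ = Σ_i λ_i and d = max_i d_i. Then for all t > 0, Pr[f ≥ E[f] + t] ≤ exp(−t²/(2λ + (2/3)·t·d)) and Pr[f ≤ E[f] − t] ≤ exp(−t²/(2λ + (2/3)·t·d)). -/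
/-!
Conditionally on all coordinates but one, `f` is a two-valued random variable whose range is at
most `d` and whose variance is at most `λᵢ`; the inequality `eˣ ≤ 1 + x + x²/(2(1 - c/3))` for
`x ≤ c < 3` bounds its centred moment generating function by `exp (λᵢ s² / (2 (1 - s d/3)))`.
Averaging `f` over one coordinate preserves both the range and (by convexity of the square) the
variance bounds in the remaining coordinates, so an induction on the number of coordinates
multiplies these factors into `E[exp (s f)] ≤ exp (s E[f] + λ s² / (2 (1 - s d/3)))`. The Chernoff
bound with a suitable `s` gives the upper tail, and the lower tail is the upper tail of `-f`.
Since the `Xᵢ` are independent and `{0,1}`-valued, all expectations are finite sums against the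
product Bernoulli weights.
-/

open MeasureTheory ProbabilityTheory Real Set Function
open scoped Nat

namespace Real

theorem exp_le_one_add_add_sq_div_two_of_nonpos {x : ℝ} (hx : x ≤ 0) :
    exp x ≤ 1 + x + x ^ 2 / 2 := by
  have hq := quadratic_le_exp_of_nonneg (neg_nonneg.2 hx)
  have hprod : exp x * exp (-x) = 1 := by rw [← exp_add, add_neg_cancel, exp_zero]
  -- `(1 + x + x²/2)(1 - x + x²/2) = 1 + x⁴/4 ≥ 1`
  nlinarith [exp_pos x, sq_nonneg (x ^ 2)]

theorem exp_sub_one_sub_le_of_lt_three {x : ℝ} (hx : 0 ≤ x) (hx3 : x < 3) :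
    exp x - 1 - x ≤ x ^ 2 / (2 * (1 - x / 3)) := by
  have hexp : HasSum (fun k : ℕ => x ^ (k + 2) / (k + 2)!) (exp x - 1 - x) := by
    have := (hasSum_nat_add_iff' 2).2 (exp_eq_exp_ℝ ▸ NormedSpace.expSeries_div_hasSum_exp x)
    simpa [Finset.sum_range_succ, sub_sub] using this
  have hgeom : HasSum (fun k : ℕ => x ^ 2 / 2 * (x / 3) ^ k) (x ^ 2 / 2 * (1 - x / 3)⁻¹) :=
    (hasSum_geometric_of_lt_one (by positivity) (by linarith)).mul_left _
  have hterm (k : ℕ) : x ^ (k + 2) / (k + 2)! ≤ x ^ 2 / 2 * (x / 3) ^ k := by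
    have hfact : ((2 * 3 ^ k : ℕ) : ℝ) ≤ (k + 2)! := by
      rw [add_comm k]; exact_mod_cast Nat.factorial_mul_pow_le_factorial (m := 2) (n := k)
    calc x ^ (k + 2) / (k + 2)! ≤ x ^ (k + 2) / ((2 * 3 ^ k : ℕ) : ℝ) :=
          div_le_div_of_nonneg_left (by positivity) (by positivity) hfact
      _ = x ^ 2 / 2 * (x / 3) ^ k := by rw [div_pow]; push_cast; ring
  calc exp x - 1 - x ≤ x ^ 2 / 2 * (1 - x / 3)⁻¹ := hasSum_le hterm hexp hgeom
    _ = x ^ 2 / (2 * (1 - x / 3)) := by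
      rw [div_mul_eq_mul_div, ← div_eq_mul_inv, div_div, mul_comm (1 - x / 3)]

theorem exp_le_one_add_add_sq_div_of_le {c x : ℝ} (hc : 0 ≤ c) (hc3 : c < 3) (hx : x ≤ c) :
    exp x ≤ 1 + x + x ^ 2 / (2 * (1 - c / 3)) := by
  rcases le_total x 0 with hx0 | hx0
  · have : x ^ 2 / 2 ≤ x ^ 2 / (2 * (1 - c / 3)) :=
      div_le_div_of_nonneg_left (sq_nonneg x) (by linarith) (by linarith)
    linarith [exp_le_one_add_add_sq_div_two_of_nonpos hx0]
  · have : x ^ 2 / (2 * (1 - x / 3)) ≤ x ^ 2 / (2 * (1 - c / 3)) :=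
      div_le_div_of_nonneg_left (sq_nonneg x) (by linarith) (by linarith)
    linarith [exp_sub_one_sub_le_of_lt_three hx0 (hx.trans_lt hc3)]

end Real

theorem one_sub_mul_exp_add_mul_exp_le {q a b D L s : ℝ} (hq0 : 0 ≤ q) (hq1 : q ≤ 1)
    (hs : 0 ≤ s) (hsD : s * D < 3) (hab : |b - a| ≤ D) (hL : q * (1 - q) * (b - a) ^ 2 ≤ L) :
    (1 - q) * exp (s * a) + q * exp (s * b) ≤
      exp (s * ((1 - q) * a + q * b) + L * (s ^ 2 / (2 * (1 - s * D / 3)))) := by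
  have hc : 0 ≤ s * D := mul_nonneg hs ((abs_nonneg _).trans hab)
  have hden : 0 < 2 * (1 - s * D / 3) := by linarith
  obtain ⟨hba, hab'⟩ := abs_le.1 hab
  set m := (1 - q) * a + q * b with hm
  have ha : s * (a - m) ≤ s * D := by
    have : a - m = q * (a - b) := by rw [hm]; ring
    rw [this]; gcongr; nlinarith
  have hb : s * (b - m) ≤ s * D := by
    have : b - m = (1 - q) * (b - a) := by rw [hm]; ring
    rw [this]; gcongr; nlinarith
  have hvar : (1 - q) * (s * (a - m)) ^ 2 + q * (s * (b - m)) ^ 2 ≤ s ^ 2 * L := by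
    have : (1 - q) * (s * (a - m)) ^ 2 + q * (s * (b - m)) ^ 2
        = s ^ 2 * (q * (1 - q) * (b - a) ^ 2) := by rw [hm]; ring
    rw [this]; gcongr
  have hexp_a := Real.exp_le_one_add_add_sq_div_of_le hc hsD ha
  have hexp_b := Real.exp_le_one_add_add_sq_div_of_le hc hsD hb
  calc (1 - q) * exp (s * a) + q * exp (s * b)
      = exp (s * m) * ((1 - q) * exp (s * (a - m)) + q * exp (s * (b - m))) := by
        simp only [mul_sub, exp_sub]; field_simp
    _ ≤ exp (s * m) * ((1 - q) * (1 + s * (a - m) + (s * (a - m)) ^ 2 / (2 * (1 - s * D / 3)))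
          + q * (1 + s * (b - m) + (s * (b - m)) ^ 2 / (2 * (1 - s * D / 3)))) := by
        gcongr _ * (?_ * ?_ + ?_ * ?_)
    _ = exp (s * m) * (1 + ((1 - q) * (s * (a - m)) ^ 2 + q * (s * (b - m)) ^ 2)
          / (2 * (1 - s * D / 3))) := by
        rw [hm]; ring
    _ ≤ exp (s * m) * (1 + L * (s ^ 2 / (2 * (1 - s * D / 3)))) := by
        rw [← mul_div_assoc, mul_comm L]; gcongr
    _ ≤ exp (s * m) * exp (L * (s ^ 2 / (2 * (1 - s * D / 3)))) := by
        gcongr; linarith [add_one_le_exp (L * (s ^ 2 / (2 * (1 - s * D / 3))))]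
    _ = _ := (exp_add _ _).symm

theorem exists_bernstein_exponent_le {Λ D t : ℝ} (hΛ : 0 ≤ Λ) (ht : 0 < t) :
    ∃ s, 0 ≤ s ∧ s * D < 3 ∧
      Λ * (s ^ 2 / (2 * (1 - s * D / 3))) - s * t ≤ -(t ^ 2) / (2 * Λ + 2 / 3 * t * D) := by
  set E := 2 * Λ + 2 / 3 * t * D with hE_def
  rcases le_or_gt E 0 with hE | hE
  · exact ⟨0, le_rfl, by simp, by simpa using div_nonneg_of_nonpos (by nlinarith) hE⟩
  -- `s = 2t/E` is the optimal parameter; for `Λ = 0` it sits at the pole `s D = 3`, and there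
  -- `s = t/E` already gives the bound.
  rcases hΛ.eq_or_lt with rfl | hΛ
  · refine ⟨t / E, by positivity, ?_, by ring_nf; simp⟩
    rw [div_mul_eq_mul_div, div_lt_iff₀ hE, hE_def]; nlinarith
  · have hsD : 2 * t / E * D < 3 := by
      rw [div_mul_eq_mul_div, div_lt_iff₀ hE, hE_def]; nlinarith
    refine ⟨2 * t / E, by positivity, hsD, le_of_eq ?_⟩
    have h1 : 1 - 2 * t / E * D / 3 = 2 * Λ / E := by field_simp; ring
    rw [h1]; field_simp; ring

section Bernoulli

variable {n : ℕ}

def bernoulliWeight (p : Fin n → ℝ) (σ : Fin n → Bool) : ℝ :=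
  ∏ i, if σ i then p i else 1 - p i

def bernoulliMean (p : Fin n → ℝ) (F : (Fin n → Bool) → ℝ) : ℝ :=
  ∑ σ, bernoulliWeight p σ * F σ

def avgHead (q : ℝ) (F : (Fin (n + 1) → Bool) → ℝ) (u : Fin n → Bool) : ℝ :=
  (1 - q) * F (Fin.cons false u) + q * F (Fin.cons true u)

def flipDiff (F : (Fin n → Bool) → ℝ) (i : Fin n) (σ : Fin n → Bool) : ℝ :=
  F (update σ i true) - F (update σ i false)

/-- `p i * (1 - p i) * flipDiff F i σ ^ 2` is the variance of `F` in the `i`-th coordinate when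
the other coordinates are frozen at `σ`. -/
def BoundedVariances (p lam : Fin n → ℝ) (D : ℝ) (F : (Fin n → Bool) → ℝ) : Prop :=
  ∀ i σ, |flipDiff F i σ| ≤ D ∧ p i * (1 - p i) * flipDiff F i σ ^ 2 ≤ lam i

variable {p : Fin n → ℝ}

theorem bernoulliWeight_nonneg (hp : ∀ i, p i ∈ Icc 0 1) (σ : Fin n → Bool) :
    0 ≤ bernoulliWeight p σ :=
  Finset.prod_nonneg fun i _ => by
    obtain ⟨h0, h1⟩ := hp i
    split <;> linarith

theorem bernoulliMean_mono (hp : ∀ i, p i ∈ Icc 0 1) {F G : (Fin n → Bool) → ℝ}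
    (hFG : ∀ σ, F σ ≤ G σ) : bernoulliMean p F ≤ bernoulliMean p G :=
  Finset.sum_le_sum fun σ _ => mul_le_mul_of_nonneg_left (hFG σ) (bernoulliWeight_nonneg hp σ)

theorem bernoulliMean_const_mul (c : ℝ) (F : (Fin n → Bool) → ℝ) :
    bernoulliMean p (fun σ => c * F σ) = c * bernoulliMean p F := by
  simp only [bernoulliMean, Finset.mul_sum]
  exact Finset.sum_congr rfl fun σ _ => by ring

theorem bernoulliMean_succ (p : Fin (n + 1) → ℝ) (F : (Fin (n + 1) → Bool) → ℝ) :
    bernoulliMean p F = bernoulliMean (Fin.tail p) (avgHead (p 0) F) := by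
  simp only [bernoulliMean, avgHead, bernoulliWeight]
  rw [← (Fin.consEquiv fun _ => Bool).sum_comp, Fintype.sum_prod_type, Fintype.sum_bool,
    ← Finset.sum_add_distrib]
  refine Finset.sum_congr rfl fun u _ => ?_
  simp only [Fin.consEquiv, Equiv.coe_fn_mk, Fin.prod_univ_succ, Fin.cons_zero, Fin.cons_succ,
    ↓reduceIte, Bool.false_eq_true, Fin.tail]
  ring

theorem flipDiff_avgHead (q : ℝ) (F : (Fin (n + 1) → Bool) → ℝ) (i : Fin n) (u : Fin n → Bool) :
    flipDiff (avgHead q F) i u = avgHead q (flipDiff F i.succ) u := by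
  simp only [flipDiff, avgHead, ← Fin.cons_update]
  ring

theorem flipDiff_zero_cons (F : (Fin (n + 1) → Bool) → ℝ) (b : Bool) (u : Fin n → Bool) :
    flipDiff F 0 (Fin.cons b u) = F (Fin.cons true u) - F (Fin.cons false u) := by
  simp [flipDiff, Fin.update_cons_zero]

theorem flipDiff_neg (F : (Fin n → Bool) → ℝ) (i : Fin n) (σ : Fin n → Bool) :
    flipDiff (-F) i σ = -flipDiff F i σ := by
  simp only [flipDiff, Pi.neg_apply]
  ring

namespace BoundedVariances

variable {lam : Fin n → ℝ} {D : ℝ} {F : (Fin n → Bool) → ℝ}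

theorem sum_nonneg (hp : ∀ i, p i ∈ Icc 0 1) (hF : BoundedVariances p lam D F) :
    0 ≤ ∑ i, lam i :=
  Finset.sum_nonneg fun i _ => by
    obtain ⟨h0, h1⟩ := hp i
    exact le_trans (by positivity) (hF i fun _ => false).2

theorem neg (hF : BoundedVariances p lam D F) : BoundedVariances p lam D (-F) := fun i σ => by
  simpa only [flipDiff_neg, abs_neg, neg_sq] using hF i σ

theorem avgHead {p lam : Fin (n + 1) → ℝ} {F : (Fin (n + 1) → Bool) → ℝ}
    (hp : ∀ i, p i ∈ Icc 0 1) (hF : BoundedVariances p lam D F) :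
    BoundedVariances (Fin.tail p) (Fin.tail lam) D (avgHead (p 0) F) := fun i u => by
  obtain ⟨h0, h1⟩ := hp 0
  obtain ⟨hi0, hi1⟩ := hp i.succ
  obtain ⟨hD₀, hv₀⟩ := hF i.succ (Fin.cons false u)
  obtain ⟨hD₁, hv₁⟩ := hF i.succ (Fin.cons true u)
  set a := flipDiff F i.succ (Fin.cons false u)
  set b := flipDiff F i.succ (Fin.cons true u)
  have hpi : 0 ≤ p i.succ * (1 - p i.succ) := mul_nonneg hi0 (sub_nonneg.2 hi1)
  rw [flipDiff_avgHead, _root_.avgHead]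
  refine ⟨?_, ?_⟩
  · calc |(1 - p 0) * a + p 0 * b| ≤ (1 - p 0) * |a| + p 0 * |b| := by
          refine (abs_add_le _ _).trans_eq ?_
          rw [abs_mul, abs_mul, abs_of_nonneg (sub_nonneg.2 h1), abs_of_nonneg h0]
      _ ≤ (1 - p 0) * D + p 0 * D := by gcongr
      _ = D := by ring
  · calc Fin.tail p i * (1 - Fin.tail p i) * ((1 - p 0) * a + p 0 * b) ^ 2
        ≤ (1 - p 0) * (p i.succ * (1 - p i.succ) * a ^ 2)
          + p 0 * (p i.succ * (1 - p i.succ) * b ^ 2) := by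
          simp only [Fin.tail]
          nlinarith [mul_nonneg (mul_nonneg h0 (sub_nonneg.2 h1)) (mul_nonneg hpi (sq_nonneg (a - b)))]
      _ ≤ (1 - p 0) * lam i.succ + p 0 * lam i.succ := by gcongr
      _ = Fin.tail lam i := by simp only [Fin.tail]; ring

end BoundedVariances

theorem bernoulliMean_exp_le {lam : Fin n → ℝ} {D : ℝ} {F : (Fin n → Bool) → ℝ}
    (hp : ∀ i, p i ∈ Icc 0 1) (hF : BoundedVariances p lam D F) {s : ℝ} (hs : 0 ≤ s)
    (hsD : s * D < 3) :
    bernoulliMean p (fun σ => exp (s * F σ)) ≤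
      exp (s * bernoulliMean p F + (∑ i, lam i) * (s ^ 2 / (2 * (1 - s * D / 3)))) := by
  induction n with
  | zero => simp [bernoulliMean, bernoulliWeight]
  | succ n ih =>
    set κ := s ^ 2 / (2 * (1 - s * D / 3))
    have hp' : ∀ i, Fin.tail p i ∈ Icc 0 1 := fun i => hp i.succ
    have hstep (u : Fin n → Bool) :
        avgHead (p 0) (fun σ => exp (s * F σ)) u ≤
          exp (lam 0 * κ) * exp (s * avgHead (p 0) F u) := by
      have hu := hF 0 (Fin.cons false u)
      rw [flipDiff_zero_cons] at hu
      rw [← exp_add, add_comm (lam 0 * κ)]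
      exact one_sub_mul_exp_add_mul_exp_le (hp 0).1 (hp 0).2 hs hsD hu.1 hu.2
    calc bernoulliMean p (fun σ => exp (s * F σ))
        = bernoulliMean (Fin.tail p) (avgHead (p 0) fun σ => exp (s * F σ)) :=
          bernoulliMean_succ _ _
      _ ≤ bernoulliMean (Fin.tail p) (fun u => exp (lam 0 * κ) * exp (s * avgHead (p 0) F u)) :=
          bernoulliMean_mono hp' hstep
      _ = exp (lam 0 * κ) * bernoulliMean (Fin.tail p) (fun u => exp (s * avgHead (p 0) F u)) :=
          bernoulliMean_const_mul _ _
      _ ≤ exp (lam 0 * κ) * exp (s * bernoulliMean (Fin.tail p) (avgHead (p 0) F)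
            + (∑ i, Fin.tail lam i) * κ) := by
          gcongr; exact ih hp' (hF.avgHead hp)
      _ = exp (s * bernoulliMean p F + (∑ i, lam i) * κ) := by
          rw [← exp_add, bernoulliMean_succ, Fin.sum_univ_succ]; simp only [Fin.tail]; ring_nf

end Bernoulli

theorem BoundedVariances.of_binary {n : ℕ} {f : (Fin n → ℝ) → ℝ} {p lam : Fin n → ℝ} {D : ℝ}
    (hLip : ∀ (a a' : Fin n → ℝ) (i : Fin n), (∀ j, j ≠ i → a j = a' j) → |f a - f a'| ≤ D)
    (hvar : ∀ (i : Fin n) (a : Fin n → ℝ), (∀ j, a j = 0 ∨ a j = 1) →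
      p i * (1 - p i) * (f (update a i 1) - f (update a i 0)) ^ 2 ≤ lam i) :
    BoundedVariances p lam D fun σ => f fun i => if σ i then 1 else 0 := fun i σ => by
  set a : Fin n → ℝ := fun j => if σ j then 1 else 0
  have hupd (b : Bool) :
      (fun j => if update σ i b j then (1 : ℝ) else 0) = update a i (if b then 1 else 0) := by
    ext j; rcases eq_or_ne j i with rfl | hj <;> simp [a, *]
  simp only [flipDiff, hupd, if_true, Bool.false_eq_true, if_false]
  refine ⟨hLip _ _ i fun j hj => by simp [hj], hvar i a fun j => ?_⟩
  by_cases h : σ j <;> simp [a, h]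

section Measure

variable {Ω β : Type*} {n : ℕ}

open Classical in
noncomputable def hitPattern (X : Fin n → Ω → β) (A : Set β) (ω : Ω) (i : Fin n) : Bool :=
  decide (X i ω ∈ A)

theorem hitPattern_preimage_singleton (X : Fin n → Ω → β) (A : Set β) (σ : Fin n → Bool) :
    hitPattern X A ⁻¹' {σ} = ⋂ i, X i ⁻¹' (if σ i then A else Aᶜ) := by
  ext ω
  simp only [mem_preimage, mem_singleton_iff, mem_iInter, funext_iff, hitPattern]
  refine forall_congr' fun i => ?_
  cases σ i <;> simp

variable [MeasurableSpace Ω] [MeasurableSpace β] {μ : Measure Ω}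

theorem measurable_hitPattern {X : Fin n → Ω → β} (hX : ∀ i, Measurable (X i)) {A : Set β}
    (hA : MeasurableSet A) : Measurable (hitPattern X A) :=
  measurable_to_countable' fun σ => by
    rw [hitPattern_preimage_singleton]
    exact .iInter fun i => hX i (by split_ifs <;> simp [hA])

theorem ProbabilityTheory.iIndepFun.measureReal_hitPattern_preimage [IsProbabilityMeasure μ]
    {X : Fin n → Ω → β} (hX : ∀ i, Measurable (X i)) (hind : iIndepFun X μ) {A : Set β}
    (hA : MeasurableSet A) (σ : Fin n → Bool) :
    μ.real (hitPattern X A ⁻¹' {σ}) = bernoulliWeight (fun i => μ.real (X i ⁻¹' A)) σ := by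
  rw [hitPattern_preimage_singleton, measureReal_def,
    hind.meas_iInter fun i => ⟨_, by split_ifs <;> simp [hA], rfl⟩, ENNReal.toReal_prod]
  refine Finset.prod_congr rfl fun i _ => ?_
  split_ifs
  · rfl
  · rw [preimage_compl, ← measureReal_def, probReal_compl_eq_one_sub (hX i hA)]

variable [IsProbabilityMeasure μ] {code : Ω → Fin n → Bool} {p : Fin n → ℝ}

theorem integral_comp_eq_bernoulliMean (hcode : Measurable code)
    (hlaw : ∀ σ, μ.real (code ⁻¹' {σ}) = bernoulliWeight p σ) (G : (Fin n → Bool) → ℝ) :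
    ∫ ω, G (code ω) ∂μ = bernoulliMean p G := by
  rw [← integral_map hcode.aemeasurable Integrable.of_finite.aestronglyMeasurable,
    integral_fintype Integrable.of_finite]
  simp [bernoulliMean, map_measureReal_apply hcode (measurableSet_singleton _), hlaw]

theorem measureReal_ge_integral_add_le (hcode : Measurable code)
    (hlaw : ∀ σ, μ.real (code ⁻¹' {σ}) = bernoulliWeight p σ) (hp : ∀ i, p i ∈ Icc 0 1)
    {lam : Fin n → ℝ} {D : ℝ} {F : (Fin n → Bool) → ℝ} (hF : BoundedVariances p lam D F)
    {t : ℝ} (ht : 0 < t) :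
    μ.real {ω | ∫ ω', F (code ω') ∂μ + t ≤ F (code ω)} ≤
      exp (-(t ^ 2) / (2 * ∑ i, lam i + 2 / 3 * t * D)) := by
  obtain ⟨s, hs, hsD, hexponent⟩ := exists_bernstein_exponent_le (D := D) (hF.sum_nonneg hp) ht
  set m := ∫ ω, F (code ω) ∂μ with hm
  set κ := s ^ 2 / (2 * (1 - s * D / 3))
  have hmgf : mgf (fun ω => F (code ω)) μ s ≤ exp (s * m + (∑ i, lam i) * κ) := by
    rw [mgf, hm, integral_comp_eq_bernoulliMean hcode hlaw,
      integral_comp_eq_bernoulliMean hcode hlaw (fun σ => exp (s * F σ))]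
    exact bernoulliMean_exp_le hp hF hs hsD
  calc μ.real {ω | m + t ≤ F (code ω)}
      ≤ exp (-s * (m + t)) * mgf (fun ω => F (code ω)) μ s :=
        measure_ge_le_exp_mul_mgf _ hs
          ((Integrable.of_finite (f := fun σ => exp (s * F σ))).comp_measurable hcode)
    _ ≤ exp (-s * (m + t)) * exp (s * m + (∑ i, lam i) * κ) := by gcongr
    _ = exp ((∑ i, lam i) * κ - s * t) := by rw [← exp_add]; ring_nf
    _ ≤ _ := exp_le_exp.2 hexponent

end Measure

/-- method of bounded variances: let `f` be a function of `n` mutually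
independent `{0,1}`-valued random variables `X i` with `Pr[X i = 1] = p i`, satisfying the
Lipschitz property with constants `d i`, and such that each conditional variance given the
other coordinates (which for binary `X i` equals
`p i (1 - p i) (f(a[i ↦ 1]) - f(a[i ↦ 0]))²`) is at most `lam i`. With `lamS = ∑ lam i`
and `dmax ≥ d i` for all `i`, for every `t > 0` both tails of `f` beyond `t` have
probability at most `exp(-t²/(2·lamS + (2/3)·t·dmax))`. -/
theorem bounded_variances_inequality
    {Ω : Type*} [MeasurableSpace Ω] (μ : Measure Ω) [IsProbabilityMeasure μ]
    (n : ℕ) (X : Fin n → Ω → ℝ) (f : (Fin n → ℝ) → ℝ)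
    (d lam p : Fin n → ℝ)
    (hmeas : ∀ i, Measurable (X i))
    (h01 : ∀ i ω, X i ω = 0 ∨ X i ω = 1)
    (hind : ProbabilityTheory.iIndepFun X μ)
    (hp : ∀ i, (μ {ω | X i ω = 1}).toReal = p i)
    (hLip : ∀ (a a' : Fin n → ℝ) (i : Fin n),
      (∀ j, j ≠ i → a j = a' j) → |f a - f a'| ≤ d i)
    (hvar : ∀ (i : Fin n) (a : Fin n → ℝ), (∀ j, a j = 0 ∨ a j = 1) →
      p i * (1 - p i) * (f (Function.update a i 1) - f (Function.update a i 0)) ^ 2 ≤ lam i)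
    (lamS dmax : ℝ) (hlamS : lamS = ∑ i, lam i) (hdmax : ∀ i, d i ≤ dmax)
    (t : ℝ) (ht : 0 < t) :
    (μ {ω | (∫ ω', f (fun i => X i ω') ∂μ) + t ≤ f (fun i => X i ω)}).toReal ≤
        Real.exp (-(t ^ 2) / (2 * lamS + 2 / 3 * t * dmax)) ∧
    (μ {ω | f (fun i => X i ω) ≤ (∫ ω', f (fun i => X i ω') ∂μ) - t}).toReal ≤
        Real.exp (-(t ^ 2) / (2 * lamS + 2 / 3 * t * dmax)) := by
  obtain rfl : p = fun i => μ.real (X i ⁻¹' {1}) := funext fun i => (hp i).symm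
  subst hlamS
  set F : (Fin n → Bool) → ℝ := fun σ => f fun i => if σ i then 1 else 0
  have hfX (ω : Ω) : f (fun i => X i ω) = F (hitPattern X {1} ω) :=
    congrArg f <| funext fun i => by rcases h01 i ω with h | h <;> simp [hitPattern, h]
  have hF : BoundedVariances _ lam dmax F :=
    .of_binary (fun a a' i h => (hLip a a' i h).trans (hdmax i)) hvar
  have hp01 (i : Fin n) : μ.real (X i ⁻¹' {1}) ∈ Icc 0 1 :=
    ⟨measureReal_nonneg, measureReal_le_one⟩
  have hcode := measurable_hitPattern hmeas (measurableSet_singleton (1 : ℝ))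
  have hlaw := hind.measureReal_hitPattern_preimage hmeas (measurableSet_singleton 1)
  simp only [hfX]
  refine ⟨measureReal_ge_integral_add_le hcode hlaw hp01 hF ht, ?_⟩
  rw [← measureReal_def]
  convert measureReal_ge_integral_add_le hcode hlaw hp01 hF.neg ht using 2
  ext ω
  simp only [mem_ofPred_eq, Pi.neg_apply, integral_neg]
  constructor <;> intro <;> linarith
end
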